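/- Let n ≥ 2, let E ∈ ℝ^{n×n} be diagonal positive definite, and let Sₙ and Sₙᴸ be defined as Sₙ = [−I_{n−1}; 1_{n−1}ᵀ] ∈ ℝ^{n×(n−1)} and Sₙᴸ = (Sₙᵀ E^{−1} Sₙ)^{−1} Sₙᵀ E^{−1}. Then for every matrix D ∈ ℝ^{n×k} whose columns each sum to zero (i.e., 1_nᵀ D = 0), one has Sₙᴸ D = −[I_{n−1} 0] D, i.e., Sₙᴸ D equals the negative of the matrix formed by the first n−1 rows of D. In particular, Sₙᴸ D does not depend on E. (Proposition 1, equation (30).) -/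

import Mathlib

/-!
Since its columns sum to zero, `D` is the image under `Sₙ` of minus its first `n − 1` rows: the
top block of `Sₙ` is `−I` and its last row is `1ᵀ`. And `Sₙᴸ` is a left inverse of `Sₙ` for every
positive definite `E`, because `Sₙ` is injective, so `Sₙᵀ E⁻¹ Sₙ` is positive definite, hence
invertible.
-/

open Matrix

/-- The all-ones column vector of length `k`, as a `k × 1` matrix. -/
def onesCol (k : ℕ) : Matrix (Fin k) (Fin 1) ℝ := Matrix.of fun _ _ => 1

/-- The matrix `Sₙ = [−I_{n−1}; 1_{n−1}ᵀ] ∈ ℝ^{n×(n−1)}`, with `n = m + 1`. -/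
def Sn (m : ℕ) : Matrix (Fin (m + 1)) (Fin m) ℝ :=
  Matrix.of fun i j => if (i : ℕ) = m then 1 else if (i : ℕ) = (j : ℕ) then -1 else 0

/-- The weighted left inverse `Sₙᴸ = (Sₙᵀ E⁻¹ Sₙ)⁻¹ Sₙᵀ E⁻¹`. -/
noncomputable def SnL (m : ℕ) (E : Matrix (Fin (m + 1)) (Fin (m + 1)) ℝ) :
    Matrix (Fin m) (Fin (m + 1)) ℝ :=
  ((Sn m)ᵀ * E⁻¹ * Sn m)⁻¹ * (Sn m)ᵀ * E⁻¹

namespace Matrix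

variable {m n K : Type*} [Fintype m] [Fintype n] [DecidableEq n] [Field K] [PartialOrder K]
  [StarRing K]

theorem PosDef.inv_conjTranspose_mul_mul_same_mul_cancel {W : Matrix m m K} {A : Matrix m n K}
    (hW : W.PosDef) (hA : Function.Injective A.mulVec) :
    (Aᴴ * W * A)⁻¹ * Aᴴ * W * A = 1 := by
  have hunit : IsUnit (Aᴴ * W * A).det :=
    (isUnit_iff_isUnit_det _).mp (hW.conjTranspose_mul_mul_same hA).isUnit
  rw [Matrix.mul_assoc _ W, Matrix.mul_assoc, ← Matrix.mul_assoc Aᴴ, nonsing_inv_mul _ hunit]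

end Matrix

theorem Sn_castSucc_apply (m : ℕ) (i j : Fin m) :
    Sn m i.castSucc j = if i = j then -1 else 0 := by
  simp [Sn, Fin.ext_iff, i.isLt.ne]

theorem Sn_last_apply (m : ℕ) (j : Fin m) : Sn m (Fin.last m) j = 1 := by
  simp [Sn]

theorem Sn_mulVec_injective (m : ℕ) : Function.Injective (Sn m).mulVec := by
  intro x y h
  funext j
  simpa [mulVec, dotProduct, Sn_castSucc_apply] using congrFun h j.castSucc

theorem eq_Sn_mul_neg_submatrix_castSucc {m k : ℕ} (D : Matrix (Fin (m + 1)) (Fin k) ℝ)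
    (hD : ∀ c, ∑ i, D i c = 0) :
    D = Sn m * -D.submatrix Fin.castSucc id := by
  ext i c
  induction i using Fin.lastCases with
  | last =>
    have := hD c
    rw [Fin.sum_univ_castSucc] at this
    simp only [mul_apply, Sn_last_apply, Matrix.neg_apply, submatrix_apply, id_eq, mul_neg, one_mul,
      Finset.sum_neg_distrib]
    linarith
  | cast j => simp [mul_apply, Sn_castSucc_apply]

theorem SnL_mul_incidence_general (m k : ℕ)
    (E : Matrix (Fin (m + 1)) (Fin (m + 1)) ℝ) (hpd : E.PosDef)
    (D : Matrix (Fin (m + 1)) (Fin k) ℝ)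
    (hD : (onesCol (m + 1))ᵀ * D = 0) :
    SnL m E * D = -(D.submatrix Fin.castSucc id) := by
  have hcol (c : Fin k) : ∑ i, D i c = 0 := by
    simpa [onesCol, mul_apply] using congrFun (congrFun hD 0) c
  have hSnL : SnL m E * Sn m = 1 := by
    simpa [SnL, conjTranspose_eq_transpose_of_trivial] using
      hpd.inv.inv_conjTranspose_mul_mul_same_mul_cancel (Sn_mulVec_injective m)
  calc SnL m E * D = SnL m E * Sn m * -D.submatrix Fin.castSucc id := by
        rw [Matrix.mul_assoc, ← eq_Sn_mul_neg_submatrix_castSucc D hcol]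
    _ = -D.submatrix Fin.castSucc id := by rw [hSnL, Matrix.one_mul]

/-- Proposition 1, equation (30): if the columns of `D` each sum to zero
(`1ᵀ D = 0`), then `Sₙᴸ D = −[I_{n−1} 0] D`, i.e. `Sₙᴸ D` is the negative of the
matrix formed by the first `n−1` rows of `D`; in particular it does not depend on `E`. -/
theorem SnL_mul_incidence (m k : ℕ) (hm : 1 ≤ m)
    (E : Matrix (Fin (m + 1)) (Fin (m + 1)) ℝ) (hdiag : E.IsDiag) (hpd : E.PosDef)
    (D : Matrix (Fin (m + 1)) (Fin k) ℝ)
    (hD : (onesCol (m + 1))ᵀ * D = 0) :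
    SnL m E * D = -(D.submatrix Fin.castSucc id) :=
  SnL_mul_incidence_general m k E hpd D hD
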